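/- arXiv:math/0302313 — 2 statements merged into one kernel-verified Lean document; each statement's English description precedes it below -/
import Mathlib

section
/- If H̃_p(Δ_{-(S∪T)}^{S,T}) ≠ 0, then there exists S' ⊇ S with H̃_p(lk_Δ S') ≠ 0, and there exists R ⊆ [n] and p' ≥ p with H̃_{p'}(Δ_R) ≠ 0. -/
open Finset

namespace SCx

variable (k : Type) [Field k] {n : ℕ}

/-- An (abstract) simplicial complex on the vertex set `Fin n`:
a set of finsets closed under taking subsets. -/
def IsComplex (Δ : Set (Finset (Fin n))) : Prop :=
  ∀ F ∈ Δ, ∀ G ⊆ F, G ∈ Δ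

/-- Simplicial `p`-chains with coefficients in `k`: functions on the faces of
cardinality `p+1`. -/
abbrev Chains (Δ : Set (Finset (Fin n))) (p : ℤ) : Type :=
  {F : Finset (Fin n) // F ∈ Δ ∧ (F.card : ℤ) = p + 1} → k

open Classical in
/-- The underlying function of the simplicial boundary map, written via its
transpose formula:
`(∂ f) G = ∑_{x : insert x G ∈ Δ} (-1)^{pos of x in insert x G} f (insert x G)`. -/
noncomputable def boundaryFun (Δ : Set (Finset (Fin n))) (p : ℤ)
    (f : Chains k Δ p) : Chains k Δ (p - 1) := fun G => ∑ x : Fin n,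
  if h : x ∉ G.1 ∧ insert x G.1 ∈ Δ then
    (-1 : k) ^ (G.1.filter (fun y => y < x)).card *
      f ⟨insert x G.1, h.2, by
        have hc := G.2.2
        rw [Finset.card_insert_of_notMem h.1]
        push_cast at hc ⊢
        omega⟩
  else 0

/-- The simplicial boundary map. -/
noncomputable def boundary (Δ : Set (Finset (Fin n))) (p : ℤ) :
    Chains k Δ p →ₗ[k] Chains k Δ (p - 1) where
  toFun := boundaryFun k Δ p
  map_add' f g := by
    funext G
    unfold boundaryFun
    rw [Pi.add_apply]
    rw [← Finset.sum_add_distrib]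
    refine Finset.sum_congr rfl fun x _ => ?_
    split_ifs with h
    · rw [Pi.add_apply]; ring
    · rw [add_zero]
  map_smul' c f := by
    funext G
    unfold boundaryFun
    simp only [RingHom.id_apply, Pi.smul_apply, smul_eq_mul, Finset.mul_sum]
    refine Finset.sum_congr rfl fun x _ => ?_
    split_ifs with h
    · ring
    · rw [mul_zero]

/-- Transport of chains along an equality of degrees. -/
noncomputable def chainsCongr (Δ : Set (Finset (Fin n))) {p q : ℤ} (h : p = q) :
    Chains k Δ p ≃ₗ[k] Chains k Δ q := by
  subst h; exact LinearEquiv.refl k _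

noncomputable def cycles (Δ : Set (Finset (Fin n))) (p : ℤ) : Submodule k (Chains k Δ p) :=
  LinearMap.ker (boundary k Δ p)

noncomputable def boundaries (Δ : Set (Finset (Fin n))) (p : ℤ) : Submodule k (Chains k Δ p) :=
  LinearMap.range ((chainsCongr k Δ (show p + 1 - 1 = p by ring)).toLinearMap ∘ₗ
    boundary k Δ (p + 1))

/-- Reduced simplicial homology of `Δ` in degree `p`, with coefficients in the field `k`,
defined as cycles modulo (boundaries intersected with cycles).  With this convention
`H̃_{-1}({∅}) = k`. -/
abbrev ReducedHomology (Δ : Set (Finset (Fin n))) (p : ℤ) :=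
  ↥(cycles k Δ p) ⧸ (Submodule.comap (cycles k Δ p).subtype (boundaries k Δ p))

/-- The Alexander dual of `Δ`. -/
def dual (Δ : Set (Finset (Fin n))) : Set (Finset (Fin n)) := {F | Fᶜ ∉ Δ}

/-- The restriction `Δ_R` of `Δ` to a vertex subset `R`. -/
def restrict (Δ : Set (Finset (Fin n))) (R : Finset (Fin n)) : Set (Finset (Fin n)) :=
  {F | F ∈ Δ ∧ F ⊆ R}

/-- The link `lk_Δ S`. -/
def link (Δ : Set (Finset (Fin n))) (S : Finset (Fin n)) : Set (Finset (Fin n)) :=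
  {F | Disjoint F S ∧ F ∪ S ∈ Δ}

/-- `Δ_R^{S,T} = {F ⊆ R : F ∪ S ∈ Δ}` (for `T` the complement of `R ∪ S`). -/
def sub (Δ : Set (Finset (Fin n))) (R S : Finset (Fin n)) : Set (Finset (Fin n)) :=
  {F | F ⊆ R ∧ F ∪ S ∈ Δ}

/-- `Δ` has dimension `d - 1`, i.e. `d` is the maximal cardinality of a face. -/
def IsDim (Δ : Set (Finset (Fin n))) (d : ℕ) : Prop :=
  (∀ F ∈ Δ, F.card ≤ d) ∧ ∃ F ∈ Δ, F.card = d

/-- `Δ` has frame dimension `c - 1`, i.e. `c` is the largest integer such that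
every `c`-subset of `[n]` is a face of `Δ`. -/
def IsFrame (Δ : Set (Finset (Fin n))) (c : ℕ) : Prop :=
  (∀ F : Finset (Fin n), F.card ≤ c → F ∈ Δ) ∧
    ∃ F : Finset (Fin n), F.card = c + 1 ∧ F ∉ Δ

/-- A facet: a maximal face. -/
def IsFacet (Δ : Set (Finset (Fin n))) (F : Finset (Fin n)) : Prop :=
  F ∈ Δ ∧ ∀ G ∈ Δ, F ⊆ G → F = G

end SCx

/-!
Identify a function `f` on the subsets of `[n]` with `∑ f F • e_F` in the exterior algebra on
`e_1, …, e_n`. A chain of a complex `K` is such a function supported on the faces of `K`, and every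
`K` uses the same boundary `∂ = ∑ₓ ιₓ`, where `ιₓ` is contraction with `e_x`. With `εₜ`
left multiplication by `e_t`, the relations `ιₓ εₜ + εₜ ιₓ = δₓₜ` give `∂ εₜ + εₜ ∂ = 1` and
`ιₜ ∂ = -∂ ιₜ`. Chasing a cycle through these identities yields the two connecting steps of the
long exact sequence of `Δ = (Δ ∖ t) ∪ star t`: nonzero `H̃_p(Δ ∖ t)` forces nonzero `H̃_p(Δ)`
or `H̃_p(lk t)`, and nonzero `H̃_p(lk t)` forces nonzero `H̃_p(Δ ∖ t)` or `H̃_{p+1}(Δ)`.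

`Δ^{S,T}_{-(S∪T)}` is `lk_Δ S` with the vertices of `T` deleted, and the link of `t ∈ T` in it
before `t` is deleted has the same form with `S ∪ {t}` in place of `S`; so iterating the first
step over `T` reaches a link `lk_Δ S'` with `S ⊆ S'`. Links of links are links, and a restriction
of `lk_Δ v` is the link of `v` in a restriction of `Δ`, so iterating the second step over the
vertices of `S'` reaches a restriction of `Δ`, in a degree that can only have gone up.
-/

namespace SCx

variable {R : Type*} [CommRing R] {n : ℕ}

variable (R) in
def insertSign (G : Finset (Fin n)) (x : Fin n) : R := (-1) ^ #{y ∈ G | y < x}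

lemma insertSign_insert {G : Finset (Fin n)} {x : Fin n} (hx : x ∉ G) (t : Fin n) :
    insertSign R (insert x G) t = if x < t then -insertSign R G t else insertSign R G t := by
  unfold insertSign
  rw [filter_insert]
  split_ifs
  · rw [card_insert_of_notMem (by simp [hx]), pow_succ, mul_neg_one]
  · rfl

lemma insertSign_insert_self (G : Finset (Fin n)) (t : Fin n) :
    insertSign R (insert t G) t = insertSign R G t := by
  simp [insertSign, filter_insert]

lemma insertSign_mul_self (G : Finset (Fin n)) (x : Fin n) :
    insertSign R G x * insertSign R G x = 1 := by
  simp [insertSign, ← mul_pow]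

variable (R) in
def contract (x : Fin n) : Module.End R (Finset (Fin n) → R) where
  toFun f G := if x ∈ G then 0 else insertSign R G x * f (insert x G)
  map_add' f g := funext fun G => by by_cases h : x ∈ G <;> simp [h, mul_add]
  map_smul' c f := funext fun G => by by_cases h : x ∈ G <;> simp [h, mul_left_comm]

variable (R) in
def wedge (t : Fin n) : Module.End R (Finset (Fin n) → R) where
  toFun f G := if t ∈ G then insertSign R G t * f (G.erase t) else 0
  map_add' f g := funext fun G => by by_cases h : t ∈ G <;> simp [h, mul_add]
  map_smul' c f := funext fun G => by by_cases h : t ∈ G <;> simp [h, mul_left_comm]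

variable (R) in
def simplexBoundary : Module.End R (Finset (Fin n) → R) := ∑ x, contract R x

lemma contract_apply (x : Fin n) (f : Finset (Fin n) → R) (G : Finset (Fin n)) :
    contract R x f G = if x ∈ G then 0 else insertSign R G x * f (insert x G) := rfl

lemma wedge_apply (t : Fin n) (f : Finset (Fin n) → R) (G : Finset (Fin n)) :
    wedge R t f G = if t ∈ G then insertSign R G t * f (G.erase t) else 0 := rfl

variable (R) in
lemma contract_mul_self (x : Fin n) : contract R x * contract R x = 0 :=
  LinearMap.ext fun f => funext fun G => by simp [contract_apply]

variable (R) in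
lemma contract_mul_contract_of_ne {x y : Fin n} (hxy : x ≠ y) :
    contract R x * contract R y = -(contract R y * contract R x) := by
  refine LinearMap.ext fun f => funext fun G => ?_
  simp only [Module.End.mul_apply, LinearMap.neg_apply, Pi.neg_apply, contract_apply, mem_insert]
  by_cases hx : x ∈ G
  · simp [hx]
  by_cases hy : y ∈ G
  · simp [hy]
  simp only [hx, hy, hxy, hxy.symm, or_self, if_false, insertSign_insert hx, insertSign_insert hy,
    insert_comm x y G]
  rcases hxy.lt_or_gt with h | h <;>
    simp only [h, h.not_gt, if_true, if_false] <;> ring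

variable (R) in
lemma contract_mul_wedge_add_wedge_mul_contract (x t : Fin n) :
    contract R x * wedge R t + wedge R t * contract R x = if x = t then 1 else 0 := by
  refine LinearMap.ext fun f => funext fun G => ?_
  simp only [LinearMap.add_apply, Module.End.mul_apply, Pi.add_apply, contract_apply, wedge_apply]
  by_cases htG : t ∈ G
  · obtain ⟨H, htH, rfl⟩ : ∃ H, t ∉ H ∧ G = insert t H :=
      ⟨G.erase t, notMem_erase t G, (insert_erase htG).symm⟩
    by_cases hxt : x = t
    · subst hxt
      simp [htH, insertSign_insert_self, ← mul_assoc, insertSign_mul_self]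
    by_cases hxH : x ∈ H
    · simp [hxH, hxt]
    have hx : x ∉ insert t H := by simp [hxt, hxH]
    have htxH : t ∉ insert x H := by simp [Ne.symm hxt, htH]
    rw [erase_insert htH, insert_comm x t H, erase_insert htxH]
    simp only [hx, hxt, hxH, mem_insert_self, if_true, if_false, insertSign_insert_self,
      insertSign_insert hxH, insertSign_insert htH, lt_irrefl, LinearMap.zero_apply, Pi.zero_apply]
    rcases Ne.lt_or_gt hxt with h | h <;>
      simp only [h, h.not_gt, if_true, if_false] <;> ring
  · by_cases hxt : x = t
    · subst hxt
      simp [htG, insertSign_insert_self, insertSign_mul_self, ← mul_assoc]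
    · simp [htG, hxt, Ne.symm hxt]

variable (R) in
lemma simplexBoundary_mul_wedge_add_wedge_mul (t : Fin n) :
    simplexBoundary R * wedge R t + wedge R t * simplexBoundary R = 1 := by
  simp only [simplexBoundary, sum_mul, mul_sum, ← sum_add_distrib,
    contract_mul_wedge_add_wedge_mul_contract, sum_ite_eq', mem_univ, if_true]

variable (R) in
lemma contract_mul_simplexBoundary (t : Fin n) :
    contract R t * simplexBoundary R = -(simplexBoundary R * contract R t) := by
  rw [eq_neg_iff_add_eq_zero]
  simp only [simplexBoundary, sum_mul, mul_sum, ← sum_add_distrib]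
  refine sum_eq_zero fun x _ => ?_
  rcases eq_or_ne t x with rfl | h
  · simp [contract_mul_self]
  · rw [contract_mul_contract_of_ne R h, neg_add_cancel]

lemma contract_contract (t : Fin n) (f : Finset (Fin n) → R) : contract R t (contract R t f) = 0 :=
  LinearMap.congr_fun (contract_mul_self R t) f

lemma contract_wedge_add_wedge_contract (t : Fin n) (f : Finset (Fin n) → R) :
    contract R t (wedge R t f) + wedge R t (contract R t f) = f := by
  simpa using LinearMap.congr_fun (contract_mul_wedge_add_wedge_mul_contract R t t) f

lemma simplexBoundary_wedge (t : Fin n) (f : Finset (Fin n) → R) :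
    simplexBoundary R (wedge R t f) = f - wedge R t (simplexBoundary R f) :=
  eq_sub_of_add_eq (LinearMap.congr_fun (simplexBoundary_mul_wedge_add_wedge_mul R t) f)

lemma contract_simplexBoundary (t : Fin n) (f : Finset (Fin n) → R) :
    contract R t (simplexBoundary R f) = -simplexBoundary R (contract R t f) :=
  LinearMap.congr_fun (contract_mul_simplexBoundary R t) f

lemma mem_link_singleton {K : Set (Finset (Fin n))} {t : Fin n} {F : Finset (Fin n)} :
    F ∈ link K {t} ↔ t ∉ F ∧ insert t F ∈ K := by
  rw [link, Set.mem_ofPred_eq, disjoint_singleton_right, union_singleton]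

lemma mem_restrict_compl_singleton {K : Set (Finset (Fin n))} {t : Fin n} {F : Finset (Fin n)} :
    F ∈ restrict K {t}ᶜ ↔ F ∈ K ∧ t ∉ F := by
  rw [restrict, Set.mem_ofPred_eq, subset_compl_singleton]

lemma restrict_subset (K : Set (Finset (Fin n))) (X : Finset (Fin n)) : restrict K X ⊆ K :=
  fun _ hF => hF.1

lemma link_singleton_subset_restrict {K : Set (Finset (Fin n))} (hK : IsComplex K) (t : Fin n) :
    link K {t} ⊆ restrict K {t}ᶜ := fun F hF => by
  rw [mem_link_singleton] at hF
  exact mem_restrict_compl_singleton.2 ⟨hK _ hF.2 F (subset_insert t F), hF.1⟩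

variable (R) in
def chainsIn (K : Set (Finset (Fin n))) (p : ℤ) : Submodule R (Finset (Fin n) → R) :=
  Submodule.pi {F | ¬(F ∈ K ∧ (#F : ℤ) = p + 1)} fun _ => ⊥

lemma mem_chainsIn {K : Set (Finset (Fin n))} {p : ℤ} {f : Finset (Fin n) → R} :
    f ∈ chainsIn R K p ↔ ∀ F, f F ≠ 0 → F ∈ K ∧ (#F : ℤ) = p + 1 := by
  simp only [chainsIn, Submodule.mem_pi, Set.mem_ofPred_eq, Submodule.mem_bot]
  exact forall_congr' fun F => not_imp_comm

lemma chainsIn_mono {K K' : Set (Finset (Fin n))} (h : K ⊆ K') (p : ℤ) :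
    chainsIn R K p ≤ chainsIn R K' p := fun f hf => by
  rw [mem_chainsIn] at hf ⊢
  exact fun F hF => ⟨h (hf F hF).1, (hf F hF).2⟩

lemma contract_mem_chainsIn_link {K : Set (Finset (Fin n))} {p : ℤ} {f : Finset (Fin n) → R}
    (hf : f ∈ chainsIn R K (p + 1)) (t : Fin n) : contract R t f ∈ chainsIn R (link K {t}) p := by
  rw [mem_chainsIn] at hf ⊢
  intro F hF
  rw [contract_apply] at hF
  split_ifs at hF with htF
  · exact absurd rfl hF
  obtain ⟨hK, hcard⟩ := hf _ (right_ne_zero_of_mul hF)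
  rw [card_insert_of_notMem htF, Nat.cast_succ] at hcard
  exact ⟨mem_link_singleton.2 ⟨htF, hK⟩, by omega⟩

lemma wedge_mem_chainsIn {K : Set (Finset (Fin n))} {p : ℤ} {t : Fin n} {f : Finset (Fin n) → R}
    (hf : f ∈ chainsIn R (link K {t}) p) : wedge R t f ∈ chainsIn R K (p + 1) := by
  rw [mem_chainsIn] at hf ⊢
  intro F hF
  rw [wedge_apply] at hF
  split_ifs at hF with htF
  · obtain ⟨hL, hcard⟩ := hf _ (right_ne_zero_of_mul hF)
    rw [mem_link_singleton, insert_erase htF] at hL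
    rw [← card_erase_add_one htF, Nat.cast_succ]
    exact ⟨hL.2, by omega⟩
  · exact absurd rfl hF

lemma simplexBoundary_mem_chainsIn {K : Set (Finset (Fin n))} (hK : IsComplex K) {p : ℤ}
    {f : Finset (Fin n) → R} (hf : f ∈ chainsIn R K (p + 1)) :
    simplexBoundary R f ∈ chainsIn R K p := by
  rw [simplexBoundary, LinearMap.sum_apply]
  exact Submodule.sum_mem _ fun t _ => chainsIn_mono
    ((link_singleton_subset_restrict hK t).trans (restrict_subset K _)) p
    (contract_mem_chainsIn_link hf t)

lemma contract_eq_zero_iff {t : Fin n} {f : Finset (Fin n) → R} :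
    contract R t f = 0 ↔ ∀ F, t ∈ F → f F = 0 := by
  constructor
  · intro h F htF
    have := congr_fun h (F.erase t)
    rwa [contract_apply, if_neg (notMem_erase t F), insert_erase htF, Pi.zero_apply,
      IsUnit.mul_right_eq_zero (IsUnit.of_mul_eq_one _ (insertSign_mul_self _ _))] at this
  · intro h
    funext G
    rw [contract_apply]
    split_ifs with htG
    · rfl
    · rw [h _ (mem_insert_self t G), mul_zero, Pi.zero_apply]

lemma mem_chainsIn_restrict_iff {K : Set (Finset (Fin n))} {p : ℤ} {t : Fin n}
    {f : Finset (Fin n) → R} :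
    f ∈ chainsIn R (restrict K {t}ᶜ) p ↔ f ∈ chainsIn R K p ∧ contract R t f = 0 := by
  simp only [mem_chainsIn, contract_eq_zero_iff, mem_restrict_compl_singleton]
  constructor
  · intro h
    exact ⟨fun F hF => ⟨(h F hF).1.1, (h F hF).2⟩,
      fun F htF => by_contra fun hF => (h F hF).1.2 htF⟩
  · rintro ⟨h, h'⟩ F hF
    exact ⟨⟨(h F hF).1, fun htF => hF (h' F htF)⟩, (h F hF).2⟩

variable (R) in
def HasNontrivialHomology (K : Set (Finset (Fin n))) (p : ℤ) : Prop :=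
  ∃ z ∈ chainsIn R K p, simplexBoundary R z = 0 ∧
    z ∉ (chainsIn R K (p + 1)).map (simplexBoundary R)

theorem hasNontrivialHomology_of_restrict_compl {K : Set (Finset (Fin n))} (hK : IsComplex K)
    {t : Fin n} {p : ℤ} (h : HasNontrivialHomology R (restrict K {t}ᶜ) p) :
    HasNontrivialHomology R K p ∨ HasNontrivialHomology R (link K {t}) p := by
  obtain ⟨z, hz, hbz, hnb⟩ := h
  obtain ⟨hzK, hcz⟩ := mem_chainsIn_restrict_iff.1 hz
  by_cases hzb : z ∈ (chainsIn R K (p + 1)).map (simplexBoundary R)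
  swap
  · exact Or.inl ⟨z, hzK, hbz, hzb⟩
  obtain ⟨u, hu, rfl⟩ := hzb
  have hbcu : simplexBoundary R (contract R t u) = 0 := by
    rw [← neg_eq_zero, ← contract_simplexBoundary, hcz]
  refine Or.inr ⟨contract R t u, contract_mem_chainsIn_link hu t, hbcu, ?_⟩
  rintro ⟨w, hw, hbw⟩
  -- `u - wedge t (contract t u)` is the part of `u` avoiding `t`
  have hu' : u - wedge R t (contract R t u) ∈ chainsIn R (restrict K {t}ᶜ) (p + 1) := by
    refine mem_chainsIn_restrict_iff.2
      ⟨sub_mem hu (wedge_mem_chainsIn (contract_mem_chainsIn_link hu t)), ?_⟩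
    have h := contract_wedge_add_wedge_contract t (contract R t u)
    rw [contract_contract, map_zero, add_zero] at h
    rw [map_sub, h, sub_self]
  have hw' := chainsIn_mono (link_singleton_subset_restrict hK t) _ hw
  refine hnb ⟨u - wedge R t (contract R t u) + w, add_mem hu' hw', ?_⟩
  rw [map_add, map_sub, simplexBoundary_wedge, hbw, hbcu, map_zero, sub_zero, sub_add_cancel]

theorem hasNontrivialHomology_of_link {K : Set (Finset (Fin n))} (hK : IsComplex K)
    {t : Fin n} {p : ℤ} (h : HasNontrivialHomology R (link K {t}) p) :
    HasNontrivialHomology R (restrict K {t}ᶜ) p ∨ HasNontrivialHomology R K (p + 1) := by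
  obtain ⟨z, hz, hbz, hnb⟩ := h
  have hzD := chainsIn_mono (link_singleton_subset_restrict hK t) p hz
  by_cases hzb : z ∈ (chainsIn R (restrict K {t}ᶜ) (p + 1)).map (simplexBoundary R)
  swap
  · exact Or.inl ⟨z, hzD, hbz, hzb⟩
  obtain ⟨w, hw, hbw⟩ := hzb
  obtain ⟨hwK, hcw⟩ := mem_chainsIn_restrict_iff.1 hw
  have hcz := (mem_chainsIn_restrict_iff.1 hzD).2
  refine Or.inr ⟨wedge R t z - w, sub_mem (wedge_mem_chainsIn hz) hwK, ?_, ?_⟩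
  · rw [map_sub, simplexBoundary_wedge, hbz, hbw, map_zero, sub_zero, sub_self]
  rintro ⟨u, hu, hbu⟩
  refine hnb ⟨-contract R t u, neg_mem (contract_mem_chainsIn_link hu t), ?_⟩
  have h := contract_wedge_add_wedge_contract t z
  rw [hcz, map_zero, add_zero] at h
  rw [map_neg, ← contract_simplexBoundary, hbu, map_sub, hcw, sub_zero, h]

lemma link_isComplex {K : Set (Finset (Fin n))} (hK : IsComplex K) (X : Finset (Fin n)) :
    IsComplex (link K X) := fun _ hF _ hG =>
  ⟨hF.1.mono_left hG, hK _ hF.2 _ (union_subset_union_left hG)⟩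

lemma restrict_isComplex {K : Set (Finset (Fin n))} (hK : IsComplex K) (X : Finset (Fin n)) :
    IsComplex (restrict K X) := fun _ hF _ hG => ⟨hK _ hF.1 _ hG, hG.trans hF.2⟩

lemma sub_isComplex {K : Set (Finset (Fin n))} (hK : IsComplex K) (X S : Finset (Fin n)) :
    IsComplex (sub K X S) := fun _ hF _ hG =>
  ⟨hG.trans hF.1, hK _ hF.2 _ (union_subset_union_left hG)⟩

lemma sub_compl_self (K : Set (Finset (Fin n))) (S : Finset (Fin n)) : sub K Sᶜ S = link K S := by
  ext F
  simp only [sub, link, Set.mem_ofPred_eq, subset_compl_iff_disjoint_right]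

lemma restrict_sub (K : Set (Finset (Fin n))) (X Y S : Finset (Fin n)) :
    restrict (sub K X S) Y = sub K (X ∩ Y) S := by
  ext F
  simp only [restrict, sub, Set.mem_ofPred_eq, subset_inter_iff]
  tauto

lemma link_sub (K : Set (Finset (Fin n))) {X Y : Finset (Fin n)} (S : Finset (Fin n))
    (hYX : Y ⊆ X) :
    link (sub K X S) Y = sub K (X \ Y) (Y ∪ S) := by
  ext F
  simp only [link, sub, Set.mem_ofPred_eq, subset_sdiff, union_subset_iff, union_assoc]
  tauto

lemma link_empty (K : Set (Finset (Fin n))) : link K ∅ = K := by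
  ext F
  simp [link]

lemma restrict_univ (K : Set (Finset (Fin n))) : restrict K univ = K := by
  ext F
  simp [restrict]

lemma link_link (K : Set (Finset (Fin n))) {X Y : Finset (Fin n)} (hXY : Disjoint X Y) :
    link (link K X) Y = link K (X ∪ Y) := by
  ext F
  simp only [link, Set.mem_ofPred_eq, disjoint_union_left, disjoint_union_right, union_assoc,
    union_comm Y X]
  have := hXY.symm
  tauto

lemma restrict_link (K : Set (Finset (Fin n))) (X Y : Finset (Fin n)) :
    restrict (link K X) Y = link (restrict K (X ∪ Y)) X := by
  ext F
  simp only [restrict, link, Set.mem_ofPred_eq, union_subset_iff, subset_union_left, and_true]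
  constructor
  · rintro ⟨⟨hFX, hK⟩, hY⟩
    exact ⟨hFX, hK, hY.trans subset_union_right⟩
  · rintro ⟨hFX, hK, hXY⟩
    exact ⟨⟨hFX, hK⟩, fun x hx => (mem_union.1 (hXY hx)).resolve_left
      (disjoint_left.1 hFX hx)⟩

lemma restrict_restrict (K : Set (Finset (Fin n))) (X Y : Finset (Fin n)) :
    restrict (restrict K X) Y = restrict K (X ∩ Y) := by
  ext F
  simp only [restrict, Set.mem_ofPred_eq, subset_inter_iff, and_assoc]

theorem exists_link_hasNontrivialHomology_of_sub {K : Set (Finset (Fin n))} (hK : IsComplex K)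
    {S T : Finset (Fin n)} (hST : Disjoint S T) {p : ℤ}
    (h : HasNontrivialHomology R (sub K (S ∪ T)ᶜ S) p) :
    ∃ S', S ⊆ S' ∧ HasNontrivialHomology R (link K S') p := by
  induction T using Finset.induction_on generalizing S with
  | empty => exact ⟨S, subset_rfl, by rwa [union_empty, sub_compl_self] at h⟩
  | insert t T htT ih =>
    obtain ⟨htS, hST⟩ := disjoint_insert_right.1 hST
    rw [show (S ∪ insert t T)ᶜ = (S ∪ T)ᶜ ∩ {t}ᶜ by ext; simp; tauto,
      ← restrict_sub] at h
    rcases hasNontrivialHomology_of_restrict_compl (sub_isComplex hK _ _) h with h | h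
    · exact ih hST h
    · rw [link_sub K S (by simpa using ⟨htS, htT⟩),
        show (S ∪ T)ᶜ \ {t} = (insert t S ∪ T)ᶜ by ext; simp; tauto,
        ← insert_eq] at h
      obtain ⟨S', hS', h'⟩ := ih (disjoint_insert_left.2 ⟨htT, hST⟩) h
      exact ⟨S', (subset_insert t S).trans hS', h'⟩

theorem exists_restrict_hasNontrivialHomology_of_link {K : Set (Finset (Fin n))} (hK : IsComplex K)
    {S : Finset (Fin n)} {p : ℤ} (h : HasNontrivialHomology R (link K S) p) :
    ∃ (X : Finset (Fin n)) (q : ℤ), p ≤ q ∧ HasNontrivialHomology R (restrict K X) q := by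
  induction S using Finset.induction_on generalizing K with
  | empty =>
    rw [link_empty] at h
    exact ⟨univ, p, le_rfl, by rwa [restrict_univ]⟩
  | insert v S hvS ih =>
    rw [insert_eq, ← link_link K (disjoint_singleton_left.2 hvS)] at h
    obtain ⟨X, q, hpq, hX⟩ := ih (link_isComplex hK {v}) h
    rw [restrict_link] at hX
    rcases hasNontrivialHomology_of_link (restrict_isComplex hK _) hX with hX | hX
    · exact ⟨_, q, hpq, by rwa [restrict_restrict] at hX⟩
    · exact ⟨_, q + 1, by omega, hX⟩

section ReducedHomology

variable {k : Type} [Field k] {Δ : Set (Finset (Fin n))}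

open Classical in
variable (Δ) in
noncomputable def extendByZero (p : ℤ) : Chains k Δ p →ₗ[k] (Finset (Fin n) → k) where
  toFun f F := if h : F ∈ Δ ∧ (#F : ℤ) = p + 1 then f ⟨F, h⟩ else 0
  map_add' f g := funext fun F => by by_cases h : F ∈ Δ ∧ (#F : ℤ) = p + 1 <;> simp [h]
  map_smul' c f := funext fun F => by by_cases h : F ∈ Δ ∧ (#F : ℤ) = p + 1 <;> simp [h]

open Classical in
lemma extendByZero_apply {p : ℤ} (f : Chains k Δ p) (F : Finset (Fin n)) :
    extendByZero Δ p f F = if h : F ∈ Δ ∧ (#F : ℤ) = p + 1 then f ⟨F, h⟩ else 0 := rfl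

lemma extendByZero_apply_val {p : ℤ} (f : Chains k Δ p) (F : {F // F ∈ Δ ∧ (#F : ℤ) = p + 1}) :
    extendByZero Δ p f F = f F := by
  rw [extendByZero_apply, dif_pos F.2]

lemma extendByZero_injective (p : ℤ) : Function.Injective (extendByZero (k := k) Δ p) :=
  fun f g h => funext fun F => by simpa only [extendByZero_apply_val] using congr_fun h F

lemma extendByZero_mem_chainsIn {p : ℤ} (f : Chains k Δ p) : extendByZero Δ p f ∈ chainsIn k Δ p :=
  mem_chainsIn.2 fun F hF => by_contra fun h => hF (by rw [extendByZero_apply, dif_neg h])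

lemma exists_extendByZero_iff {p : ℤ} {P : (Finset (Fin n) → k) → Prop} :
    (∃ f : Chains k Δ p, P (extendByZero Δ p f)) ↔ ∃ z ∈ chainsIn k Δ p, P z := by
  refine ⟨fun ⟨f, hf⟩ => ⟨_, extendByZero_mem_chainsIn f, hf⟩,
    fun ⟨z, hz, hPz⟩ => ⟨fun F => z F, ?_⟩⟩
  convert hPz
  funext F
  rw [extendByZero_apply]
  split_ifs with h
  · rfl
  · exact (not_imp_comm.1 (mem_chainsIn.1 hz F) h).symm

lemma extendByZero_chainsCongr {p q : ℤ} (h : p = q) (f : Chains k Δ p) :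
    extendByZero Δ q (chainsCongr k Δ h f) = extendByZero Δ p f := by
  subst h; rfl

lemma extendByZero_boundary (hΔ : IsComplex Δ) {p : ℤ} (f : Chains k Δ p) :
    extendByZero Δ (p - 1) (boundary k Δ p f) = simplexBoundary k (extendByZero Δ p f) := by
  funext G
  rw [extendByZero_apply]
  split_ifs with hG
  · show boundaryFun k Δ p f ⟨G, hG⟩ = _
    rw [simplexBoundary, LinearMap.sum_apply, Finset.sum_apply]
    refine sum_congr rfl fun x _ => ?_
    rw [contract_apply, extendByZero_apply]
    by_cases hxG : x ∈ G
    · rw [dif_neg (fun h => h.1 hxG), if_pos hxG]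
    by_cases hx : insert x G ∈ Δ
    · have hcard : (#(insert x G) : ℤ) = p + 1 := by
        rw [card_insert_of_notMem hxG, Nat.cast_succ, hG.2, sub_add_cancel]
      rw [dif_pos ⟨hxG, hx⟩, if_neg hxG, dif_pos ⟨hx, hcard⟩]
      rfl
    · rw [dif_neg (fun h => hx h.2), if_neg hxG, dif_neg (fun h => hx h.1), mul_zero]
  · have hf : extendByZero Δ p f ∈ chainsIn k Δ (p - 1 + 1) := by
      rw [sub_add_cancel]; exact extendByZero_mem_chainsIn f
    exact (not_imp_comm.1 (mem_chainsIn.1 (simplexBoundary_mem_chainsIn hΔ hf) G) hG).symm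

theorem not_subsingleton_reducedHomology_iff (hΔ : IsComplex Δ) (p : ℤ) :
    ¬ Subsingleton (ReducedHomology k Δ p) ↔ HasNontrivialHomology k Δ p := by
  have mem_cycles (f : Chains k Δ p) :
      f ∈ cycles k Δ p ↔ simplexBoundary k (extendByZero Δ p f) = 0 := by
    rw [cycles, LinearMap.mem_ker, ← extendByZero_boundary hΔ,
      ← (extendByZero_injective (p - 1)).eq_iff, map_zero]
  have mem_boundaries (f : Chains k Δ p) : f ∈ boundaries k Δ p ↔
      extendByZero Δ p f ∈ (chainsIn k Δ (p + 1)).map (simplexBoundary k) := by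
    simp only [boundaries, LinearMap.mem_range, LinearMap.comp_apply, LinearEquiv.coe_coe,
      Submodule.mem_map]
    refine Iff.trans ?_ exists_extendByZero_iff
    refine exists_congr fun g => ?_
    rw [← extendByZero_boundary hΔ, ← extendByZero_chainsCongr (show p + 1 - 1 = p by ring),
      (extendByZero_injective p).eq_iff]
  rw [Submodule.Quotient.subsingleton_iff, Submodule.eq_top_iff', HasNontrivialHomology,
    not_forall]
  refine Iff.trans ?_ exists_extendByZero_iff
  simp only [Subtype.exists, Submodule.mem_comap, Submodule.subtype_apply, exists_prop,
    mem_cycles, mem_boundaries]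

end ReducedHomology

/-- if `H̃_p(Δ_{-(S∪T)}^{S,T}) ≠ 0` then some link of an `S' ⊇ S`
has nonzero `H̃_p`, and some restriction has nonzero `H̃_{p'}` with `p' ≥ p`. -/
theorem stmt11 (k : Type) [Field k] {n : ℕ} (Δ : Set (Finset (Fin n)))
    (hΔ : IsComplex Δ) (S T : Finset (Fin n)) (hST : Disjoint S T) (p : ℤ)
    (h : ¬ Subsingleton (ReducedHomology k (sub Δ (S ∪ T)ᶜ S) p)) :
    (∃ S' : Finset (Fin n), S ⊆ S' ∧
      ¬ Subsingleton (ReducedHomology k (link Δ S') p)) ∧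
    (∃ (R : Finset (Fin n)) (p' : ℤ), p ≤ p' ∧
      ¬ Subsingleton (ReducedHomology k (restrict Δ R) p')) := by
  rw [not_subsingleton_reducedHomology_iff (sub_isComplex hΔ _ _)] at h
  obtain ⟨S', hSS', hS'⟩ := exists_link_hasNontrivialHomology_of_sub hΔ hST h
  obtain ⟨R, p', hpp', hR⟩ := exists_restrict_hasNontrivialHomology_of_link hΔ hS'
  exact ⟨⟨S', hSS', (not_subsingleton_reducedHomology_iff (link_isComplex hΔ S') p).2 hS'⟩,
    ⟨R, p', hpp', (not_subsingleton_reducedHomology_iff (restrict_isComplex hΔ R) p').2 hR⟩⟩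

end SCx
end

section
/- A simplicial complex Δ on [n] with frame dimension c-1 satisfies: any two distinct facets intersect in a set of cardinality less than c if and only if H̃_0(lk_Δ S) = 0 for all faces S with |S| ≥ c (equivalently, every link lk_Δ S with |S| ≥ c is a simplex). -/
open Finset

namespace SCx

variable (k : Type) [Field k] {n : ℕ}

/-!
Write `Γ S` for the graph on the vertices of `lk_Δ S` whose edges are its 1-faces. Over a field,
`H̃_0` of a complex vanishes exactly when its 1-skeleton is connected: if `x - y = ∂g`, summing `∂g`
over the connected component of `x` gives `0`, because every edge inside the component enters
that sum twice with opposite signs, so `y` lies in that component; conversely, a 0-cycle has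
coefficient sum `0`, hence is a combination of the differences `x - v`, and `x - v` is the
boundary of a path from `v` to `x`.

If distinct facets meet in fewer than `c` vertices, a face `S` with `|S| ≥ c` lies in a unique
facet `M`, and `lk_Δ S` is the full simplex on `M \ S`, so `Γ S` is complete. Conversely, if
`F ≠ G` are facets with `|F ∩ G| ≥ c`, a path in `Γ (F ∩ G)` from a vertex of `F \ G` to one of
`G \ F` leaves `F` along some edge `{u, w}`; any facet `H ⊇ {u, w} ∪ (F ∩ G)` satisfies
`F ∩ G ⊊ F ∩ H` and `H ≠ F`, so no facet `H ≠ F` can maximise `|F ∩ H|`.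
-/

theorem sum_sum_eq_zero_of_antisymm {ι M : Type*} [AddCommGroup M] (s : Finset ι)
    (f : ι → ι → M) (hanti : ∀ i j, f i j + f j i = 0) (hdiag : ∀ i, f i i = 0) :
    ∑ i ∈ s, ∑ j ∈ s, f i j = 0 := by
  rw [← Finset.sum_product']
  refine Finset.sum_involution (fun p _ => p.swap) (fun p _ => hanti p.1 p.2) ?_
    (fun p hp => Finset.mem_product.2 (Finset.mem_product.1 hp).symm) (fun p _ => p.swap_swap)
  rintro ⟨i, j⟩ _ hij hswap
  obtain rfl : j = i := congrArg Prod.fst hswap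
  exact hij (hdiag j)

theorem pair_eq_pair_iff {α : Type*} [DecidableEq α] {x y z w : α} :
    ({x, y} : Finset α) = {z, w} ↔ x = z ∧ y = w ∨ x = w ∧ y = z := by
  rw [← Finset.coe_inj, Finset.coe_pair, Finset.coe_pair, Set.pair_eq_pair_iff]

theorem neg_one_pow_card_filter_singleton_lt {α R : Type*} [LinearOrder α] [Ring R] (x y : α) :
    (-1 : R) ^ #(({x} : Finset α).filter (· < y)) = if x < y then -1 else 1 := by
  rw [filter_singleton]
  split_ifs <;> simp

def oneSkeleton (Δ : Set (Finset (Fin n))) : SimpleGraph (Fin n) where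
  Adj x y := x ≠ y ∧ {x, y} ∈ Δ
  symm := ⟨fun x y h => ⟨h.1.symm, Finset.pair_comm x y ▸ h.2⟩⟩
  loopless := ⟨fun _ h => h.1 rfl⟩

@[simp]
theorem oneSkeleton_adj {Δ : Set (Finset (Fin n))} {x y : Fin n} :
    (oneSkeleton Δ).Adj x y ↔ x ≠ y ∧ {x, y} ∈ Δ :=
  Iff.rfl

section Homology

variable {k} {Δ : Set (Finset (Fin n))}

open Classical in
/-- A chain extended by zero to all finsets, so that it can be evaluated without membership
proofs. -/
noncomputable def Chains.extend {p : ℤ} (f : Chains k Δ p) (F : Finset (Fin n)) : k :=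
  if h : F ∈ Δ ∧ (F.card : ℤ) = p + 1 then f ⟨F, h⟩ else 0

theorem Chains.extend_of_mem {p : ℤ} (f : Chains k Δ p) {F : Finset (Fin n)}
    (hF : F ∈ Δ ∧ (F.card : ℤ) = p + 1) : f.extend F = f ⟨F, hF⟩ :=
  dif_pos hF

theorem Chains.extend_of_notMem {p : ℤ} (f : Chains k Δ p) {F : Finset (Fin n)} (hF : F ∉ Δ) :
    f.extend F = 0 :=
  dif_neg fun h => hF h.1

@[simp]
theorem Chains.extend_zero {p : ℤ} (F : Finset (Fin n)) : (0 : Chains k Δ p).extend F = 0 := by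
  unfold Chains.extend; split_ifs <;> rfl

@[simp]
theorem Chains.extend_sub {p : ℤ} (f g : Chains k Δ p) (F : Finset (Fin n)) :
    (f - g).extend F = f.extend F - g.extend F := by
  unfold Chains.extend; split_ifs <;> simp

theorem Chains.extend_chainsCongr {p q : ℤ} (h : p = q) (f : Chains k Δ p)
    (F : Finset (Fin n)) : (chainsCongr k Δ h f).extend F = f.extend F := by
  subst h; rfl

theorem Chains.zero_ext {f g : Chains k Δ 0}
    (h : ∀ x, {x} ∈ Δ → f.extend {x} = g.extend {x}) : f = g := by
  funext ⟨F, hF, hcard⟩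
  obtain ⟨x, rfl⟩ := Finset.card_eq_one.mp (by omega : F.card = 1)
  rw [← f.extend_of_mem, ← g.extend_of_mem]
  exact h x hF

noncomputable def Chains.single (p : ℤ) (F : Finset (Fin n)) : Chains k Δ p :=
  fun G => if G.1 = F then 1 else 0

theorem Chains.extend_single {p : ℤ} {F : Finset (Fin n)} (hF : F ∈ Δ ∧ (F.card : ℤ) = p + 1)
    (G : Finset (Fin n)) :
    (Chains.single p F : Chains k Δ p).extend G = if G = F then 1 else 0 := by
  unfold Chains.extend Chains.single
  split_ifs with h h' h' <;> first | rfl | subst h'; exact absurd hF h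

theorem boundary_apply_eq_sum {p : ℤ} (f : Chains k Δ p)
    (G : {F : Finset (Fin n) // F ∈ Δ ∧ (F.card : ℤ) = p - 1 + 1}) :
    boundary k Δ p f G =
      ∑ x ∈ G.1ᶜ, (-1 : k) ^ #(G.1.filter (· < x)) * f.extend (insert x G.1) := by
  show boundaryFun k Δ p f G = _
  unfold boundaryFun
  rw [← Finset.sum_subset (Finset.subset_univ G.1ᶜ)]
  · refine Finset.sum_congr rfl fun x hx => ?_
    have hx : x ∉ G.1 := Finset.mem_compl.1 hx
    by_cases hxΔ : insert x G.1 ∈ Δ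
    · rw [dif_pos ⟨hx, hxΔ⟩]
      exact congrArg _ (f.extend_of_mem _).symm
    · rw [dif_neg fun h => hxΔ h.2, f.extend_of_notMem hxΔ, mul_zero]
  · intro x _ hx
    exact dif_neg fun h => hx (Finset.mem_compl.2 h.1)

theorem extend_boundary_zero_empty (h : ∅ ∈ Δ) (f : Chains k Δ 0) :
    (boundary k Δ 0 f).extend ∅ = ∑ x, f.extend {x} := by
  rw [Chains.extend_of_mem _ ⟨h, by norm_num⟩, boundary_apply_eq_sum, Finset.compl_empty]
  simp

noncomputable def Chains.orientedEdge (g : Chains k Δ (0 + 1)) (x y : Fin n) : k :=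
  if x < y then -g.extend {x, y} else if y < x then g.extend {x, y} else 0

theorem Chains.orientedEdge_self (g : Chains k Δ (0 + 1)) (x : Fin n) :
    g.orientedEdge x x = 0 := by
  simp [Chains.orientedEdge]

theorem Chains.orientedEdge_add_swap (g : Chains k Δ (0 + 1)) (x y : Fin n) :
    g.orientedEdge x y + g.orientedEdge y x = 0 := by
  unfold Chains.orientedEdge
  rw [Finset.pair_comm y x]
  rcases lt_trichotomy x y with h | rfl | h
  · simp [h, h.not_gt]
  · simp
  · simp [h, h.not_gt]

theorem Chains.orientedEdge_eq_zero_of_not_adj (g : Chains k Δ (0 + 1)) {x y : Fin n}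
    (h : ¬ (oneSkeleton Δ).Adj x y) : g.orientedEdge x y = 0 := by
  rcases eq_or_ne x y with rfl | hxy
  · exact g.orientedEdge_self x
  · simp [Chains.orientedEdge, g.extend_of_notMem fun hΔ => h (oneSkeleton_adj.2 ⟨hxy, hΔ⟩)]

theorem extend_boundary_one_singleton (g : Chains k Δ (0 + 1)) {x : Fin n} (hx : {x} ∈ Δ) :
    (boundary k Δ (0 + 1) g).extend {x} = ∑ y, g.orientedEdge x y := by
  rw [Chains.extend_of_mem _ ⟨hx, by norm_num⟩, boundary_apply_eq_sum,
    ← Finset.sum_compl_add_sum {x}, Finset.sum_singleton, g.orientedEdge_self, add_zero]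
  refine Finset.sum_congr rfl fun y hy => ?_
  have hxy : x ≠ y := fun h => Finset.mem_compl.1 hy (h ▸ Finset.mem_singleton_self x)
  rw [neg_one_pow_card_filter_singleton_lt, Chains.orientedEdge, Finset.pair_comm]
  rcases hxy.lt_or_gt with h | h
  · simp [h]
  · simp [h, h.not_gt]

theorem sum_extend_boundary_one_eq_zero (g : Chains k Δ (0 + 1)) {C : Finset (Fin n)}
    (hC : ∀ x ∈ C, {x} ∈ Δ) (hCadj : ∀ x y, (oneSkeleton Δ).Adj x y → x ∈ C → y ∈ C) :
    ∑ x ∈ C, (boundary k Δ (0 + 1) g).extend {x} = 0 := by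
  calc ∑ x ∈ C, (boundary k Δ (0 + 1) g).extend {x}
      = ∑ x ∈ C, ∑ y ∈ C, g.orientedEdge x y := by
        refine Finset.sum_congr rfl fun x hx => ?_
        rw [extend_boundary_one_singleton g (hC x hx)]
        exact (Finset.sum_subset (Finset.subset_univ C) fun y _ hy =>
          g.orientedEdge_eq_zero_of_not_adj fun h => hy (hCadj x y h hx)).symm
    _ = 0 := sum_sum_eq_zero_of_antisymm C _ g.orientedEdge_add_swap g.orientedEdge_self

theorem single_sub_single_mem_boundaries_of_lt (hΔ : IsComplex Δ) {x y : Fin n} (hxy : x < y)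
    (h : {x, y} ∈ Δ) : Chains.single 0 {y} - Chains.single 0 {x} ∈ boundaries k Δ 0 := by
  have hedge : ∀ z w, (Chains.single (0 + 1) {x, y} : Chains k Δ (0 + 1)).extend {z, w} =
      if ({z, w} : Finset (Fin n)) = {x, y} then 1 else 0 :=
    fun z w => Chains.extend_single ⟨h, by rw [Finset.card_pair hxy.ne]; norm_num⟩ {z, w}
  refine ⟨Chains.single (0 + 1) {x, y}, Chains.zero_ext fun z hz => ?_⟩
  rw [LinearMap.comp_apply, LinearEquiv.coe_coe, Chains.extend_chainsCongr,
    extend_boundary_one_singleton _ hz, Chains.extend_sub,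
    Chains.extend_single ⟨hΔ _ h _ (by simp), by simp⟩,
    Chains.extend_single ⟨hΔ _ h _ (by simp), by simp⟩]
  simp only [Chains.orientedEdge, hedge, pair_eq_pair_iff, Finset.singleton_inj]
  rcases eq_or_ne z x with rfl | hzx
  · rw [Finset.sum_eq_single y (fun w _ hw => by simp [hw, hxy.ne]) (by simp)]
    simp [hxy.ne, hxy]
  rcases eq_or_ne z y with rfl | hzy
  · rw [Finset.sum_eq_single x (fun w _ hw => by simp [hw, hxy.ne']) (by simp)]
    simp [hxy.ne', hxy, hxy.not_gt]
  · simp [hzx, hzy]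

theorem single_sub_single_mem_boundaries_of_adj (hΔ : IsComplex Δ) {x y : Fin n}
    (h : (oneSkeleton Δ).Adj x y) :
    Chains.single 0 {x} - Chains.single 0 {y} ∈ boundaries k Δ 0 := by
  obtain ⟨hxy, hxyΔ⟩ := oneSkeleton_adj.1 h
  rcases hxy.lt_or_gt with hlt | hlt
  · rw [← neg_sub]
    exact neg_mem (single_sub_single_mem_boundaries_of_lt hΔ hlt hxyΔ)
  · exact single_sub_single_mem_boundaries_of_lt hΔ hlt (Finset.pair_comm x y ▸ hxyΔ)

theorem single_sub_single_mem_boundaries_of_reachable (hΔ : IsComplex Δ) {x y : Fin n}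
    (h : (oneSkeleton Δ).Reachable x y) :
    Chains.single 0 {x} - Chains.single 0 {y} ∈ boundaries k Δ 0 := by
  obtain ⟨p⟩ := h
  induction p with
  | nil => rw [sub_self]; exact zero_mem _
  | cons hadj _ ih =>
    rw [← sub_add_sub_cancel]
    exact add_mem (single_sub_single_mem_boundaries_of_adj hΔ hadj) ih

theorem subsingleton_reducedHomology_iff (p : ℤ) :
    Subsingleton (ReducedHomology k Δ p) ↔ cycles k Δ p ≤ boundaries k Δ p := by
  rw [Submodule.Quotient.subsingleton_iff, Submodule.eq_top_iff']
  exact ⟨fun h f hf => h ⟨f, hf⟩, fun h f => h f.2⟩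

theorem subsingleton_reducedHomology_zero_of_reachable (hΔ : IsComplex Δ)
    (h : ∀ x y, {x} ∈ Δ → {y} ∈ Δ → (oneSkeleton Δ).Reachable x y) :
    Subsingleton (ReducedHomology k Δ 0) := by
  rw [subsingleton_reducedHomology_iff]
  intro f hf
  by_cases hv : ∃ v, {v} ∈ Δ
  swap
  · obtain rfl : f = 0 := Chains.zero_ext fun x hx => absurd ⟨x, hx⟩ hv
    exact zero_mem _
  obtain ⟨v, hv⟩ := hv
  have hsum : ∑ x, f.extend {x} = 0 := by
    rw [← extend_boundary_zero_empty (hΔ _ hv _ (Finset.empty_subset _)),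
      LinearMap.mem_ker.1 hf, Chains.extend_zero]
  have hf_eq : f = ∑ x, f.extend {x} • (Chains.single 0 {x} - Chains.single 0 {v}) := by
    refine Chains.zero_ext fun x hx => ?_
    rw [Chains.extend_of_mem (∑ x, _) ⟨hx, by simp⟩, Finset.sum_apply]
    simp [Chains.single, mul_sub, Finset.sum_sub_distrib, hsum]
  rw [hf_eq]
  refine Submodule.sum_mem _ fun x _ => ?_
  by_cases hx : {x} ∈ Δ
  · exact Submodule.smul_mem _ _ (single_sub_single_mem_boundaries_of_reachable hΔ (h x v hx hv))
  · rw [f.extend_of_notMem hx, zero_smul]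
    exact zero_mem _

theorem reachable_of_subsingleton_reducedHomology_zero (hΔ : IsComplex Δ)
    (hH : Subsingleton (ReducedHomology k Δ 0)) {x y : Fin n} (hx : {x} ∈ Δ) (hy : {y} ∈ Δ) :
    (oneSkeleton Δ).Reachable x y := by
  classical
  have hextend : ∀ z, (Chains.single 0 {x} - Chains.single 0 {y} : Chains k Δ 0).extend {z} =
      (if z = x then 1 else 0) - if z = y then 1 else 0 := fun z => by
    simp [Chains.extend_single (p := 0) ⟨hx, by simp⟩,
      Chains.extend_single (p := 0) ⟨hy, by simp⟩]
  have hcycle : Chains.single 0 {x} - Chains.single 0 {y} ∈ cycles k Δ 0 := by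
    refine LinearMap.mem_ker.2 (funext fun ⟨F, hF, hcard⟩ => ?_)
    obtain rfl : F = ∅ := Finset.card_eq_zero.1 (by omega)
    rw [← (boundary k Δ 0 _).extend_of_mem, extend_boundary_zero_empty hF]
    simp [hextend]
  obtain ⟨g, hg⟩ := (subsingleton_reducedHomology_iff 0).1 hH hcycle
  have hboundary : ∀ z, (boundary k Δ (0 + 1) g).extend {z} =
      (Chains.single 0 {x} - Chains.single 0 {y} : Chains k Δ 0).extend {z} := fun z => by
    rw [← hg, LinearMap.comp_apply, LinearEquiv.coe_coe, Chains.extend_chainsCongr]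
  set C := Finset.univ.filter fun z => ({z} : Finset (Fin n)) ∈ Δ ∧ (oneSkeleton Δ).Reachable x z
  have hC := sum_extend_boundary_one_eq_zero g (C := C) (fun z hz => (Finset.mem_filter.1 hz).2.1)
    fun a b hab ha => by
      obtain ⟨-, -, hxa⟩ := Finset.mem_filter.1 ha
      exact Finset.mem_filter.2 ⟨Finset.mem_univ b,
        hΔ _ (oneSkeleton_adj.1 hab).2 _ (by simp), hxa.trans hab.reachable⟩
  have hxC : x ∈ C := Finset.mem_filter.2 ⟨Finset.mem_univ x, hx, .rfl⟩
  simp only [hboundary, hextend, Finset.sum_sub_distrib, Finset.sum_ite_eq', if_pos hxC] at hC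
  by_contra hxy
  have hyC : y ∉ C := fun h => hxy (Finset.mem_filter.1 h).2.2
  simp [hyC] at hC

theorem subsingleton_reducedHomology_zero_iff (hΔ : IsComplex Δ) :
    Subsingleton (ReducedHomology k Δ 0) ↔
      ∀ x y, {x} ∈ Δ → {y} ∈ Δ → (oneSkeleton Δ).Reachable x y :=
  ⟨fun hH _ _ hx hy => reachable_of_subsingleton_reducedHomology_zero hΔ hH hx hy,
    subsingleton_reducedHomology_zero_of_reachable hΔ⟩

end Homology

section Facets

variable {Δ : Set (Finset (Fin n))}

theorem IsComplex.link (hΔ : IsComplex Δ) (S : Finset (Fin n)) : IsComplex (link Δ S) :=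
  fun _ hF _ hGF => ⟨Finset.disjoint_of_subset_left hGF hF.1,
    hΔ _ hF.2 _ (Finset.union_subset_union_left hGF)⟩

theorem exists_isFacet_superset {F : Finset (Fin n)} (hF : F ∈ Δ) :
    ∃ M, IsFacet Δ M ∧ F ⊆ M := by
  obtain ⟨M, hFM, hM⟩ := Finite.exists_le_maximal (p := (· ∈ Δ)) hF
  exact ⟨M, ⟨hM.1, fun G hG hMG => le_antisymm hMG (hM.2 hG hMG)⟩, hFM⟩

theorem pair_mem_link_of_card_inter_lt (hΔ : IsComplex Δ) {c : ℕ}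
    (hfacets : ∀ F G, IsFacet Δ F → IsFacet Δ G → F ≠ G → (F ∩ G).card < c)
    {S : Finset (Fin n)} (hS : c ≤ S.card) {x y : Fin n} (hx : {x} ∈ link Δ S)
    (hy : {y} ∈ link Δ S) : {x, y} ∈ link Δ S := by
  obtain ⟨Fx, hFx, hxFx⟩ := exists_isFacet_superset hx.2
  obtain ⟨Fy, hFy, hyFy⟩ := exists_isFacet_superset hy.2
  have hSF : S ⊆ Fx ∩ Fy :=
    Finset.subset_inter (Finset.subset_union_right.trans hxFx)
      (Finset.subset_union_right.trans hyFy)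
  obtain rfl : Fx = Fy := by
    by_contra hne
    exact (hfacets Fx Fy hFx hFy hne).not_ge (hS.trans (Finset.card_le_card hSF))
  refine ⟨Finset.disjoint_insert_left.2 ⟨Finset.disjoint_singleton_left.1 hx.1, hy.1⟩,
    hΔ Fx hFx.1 _ (Finset.union_subset ?_ (Finset.subset_union_right.trans hxFx))⟩
  exact Finset.insert_subset (hxFx (by simp)) (Finset.singleton_subset_iff.2 (hyFy (by simp)))

theorem singleton_mem_link_inter {F G : Finset (Fin n)} (hΔ : IsComplex Δ) (hF : F ∈ Δ)
    {a : Fin n} (haF : a ∈ F) (haG : a ∉ G) : {a} ∈ link Δ (F ∩ G) :=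
  ⟨Finset.disjoint_singleton_left.2 fun h => haG (Finset.mem_inter.1 h).2,
    hΔ F hF _ (Finset.union_subset (Finset.singleton_subset_iff.2 haF) Finset.inter_subset_left)⟩

theorem exists_isFacet_inter_ssubset (hΔ : IsComplex Δ) {F G : Finset (Fin n)}
    (hF : IsFacet Δ F) (hG : IsFacet Δ G) (hne : F ≠ G)
    (hconn : ∀ x y, {x} ∈ link Δ (F ∩ G) → {y} ∈ link Δ (F ∩ G) →
      (oneSkeleton (link Δ (F ∩ G))).Reachable x y) :
    ∃ H, IsFacet Δ H ∧ H ≠ F ∧ F ∩ G ⊂ F ∩ H := by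
  obtain ⟨a, haF, haG⟩ := Finset.not_subset.1 fun h => hne (hF.2 G hG.1 h)
  obtain ⟨b, hbG, hbF⟩ := Finset.not_subset.1 fun h => hne (hG.2 F hF.1 h).symm
  have hb := singleton_mem_link_inter hΔ hG.1 hbG hbF
  rw [Finset.inter_comm G F] at hb
  obtain ⟨p⟩ := hconn a b (singleton_mem_link_inter hΔ hF.1 haF haG) hb
  obtain ⟨d, -, hdF, hdF'⟩ := p.exists_boundary_dart (F : Set (Fin n)) haF hbF
  obtain ⟨-, hdisj, hdΔ⟩ := oneSkeleton_adj.1 d.adj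
  obtain ⟨H, hH, hsub⟩ := exists_isFacet_superset hdΔ
  refine ⟨H, hH, fun h => hdF' (h ▸ hsub (by simp)), ?_⟩
  rw [Finset.ssubset_iff_of_subset
    (Finset.subset_inter Finset.inter_subset_left (Finset.subset_union_right.trans hsub))]
  exact ⟨d.fst, Finset.mem_inter.2 ⟨hdF, hsub (by simp)⟩, Finset.disjoint_left.1 hdisj (by simp)⟩

end Facets

theorem stmt12_general (k : Type) [Field k] {n : ℕ} (Δ : Set (Finset (Fin n)))
    (hΔ : IsComplex Δ) (c : ℕ) :
    (∀ F G : Finset (Fin n), IsFacet Δ F → IsFacet Δ G → F ≠ G →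
        (F ∩ G).card < c) ↔
    (∀ S ∈ Δ, c ≤ S.card →
        Subsingleton (ReducedHomology k (link Δ S) (0 : ℤ))) := by
  simp_rw [subsingleton_reducedHomology_zero_iff (hΔ.link _)]
  refine ⟨fun hfacets S _ hS x y hx hy => ?_, fun hconn F G hF hG hne => ?_⟩
  · rcases eq_or_ne x y with rfl | hxy
    · exact .rfl
    · exact (oneSkeleton_adj.2 ⟨hxy, pair_mem_link_of_card_inter_lt hΔ hfacets hS hx hy⟩).reachable
  · classical
    by_contra! hc
    obtain ⟨H, hH, hmax⟩ := (Finset.univ.filter fun H => IsFacet Δ H ∧ H ≠ F).exists_max_image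
      (fun H => (F ∩ H).card) ⟨G, by simp [hG, hne.symm]⟩
    rw [Finset.mem_filter] at hH
    obtain ⟨H', hH', hH'F, hlt⟩ := exists_isFacet_inter_ssubset hΔ hF hH.2.1 hH.2.2.symm
      (hconn _ (hΔ F hF.1 _ Finset.inter_subset_left)
        (hc.trans (hmax G (by simp [hG, hne.symm]))))
    exact (Finset.card_lt_card hlt).not_ge (hmax H' (by simp [hH', hH'F]))

/-- any two distinct facets intersect in cardinality `< c` iff
`H̃_0(lk_Δ S) = 0` for all faces `S` with `|S| ≥ c`. -/
theorem stmt12 (k : Type) [Field k] {n : ℕ} (Δ : Set (Finset (Fin n)))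
    (hΔ : IsComplex Δ) (c : ℕ) (hc : IsFrame Δ c) :
    (∀ F G : Finset (Fin n), IsFacet Δ F → IsFacet Δ G → F ≠ G →
        (F ∩ G).card < c) ↔
    (∀ S ∈ Δ, c ≤ S.card →
        Subsingleton (ReducedHomology k (link Δ S) (0 : ℤ))) :=
  stmt12_general k Δ hΔ c

end SCx
end
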